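/- arXiv:2305.16298 — 6 statements merged into one kernel-verified Lean document; each statement's English description precedes it below -/
import Mathlib

section
/- Let X be a metric space, E > 0, α : [0,A] → X a geodesic, p a (1,E)-coarsely Lipschitz nearest-point projection for α, and h the curtain dual to α at an interval I = [a, a+6E] with half-spaces h⁺ and h⁻. Then for every x ∈ h⁺ and y ∈ h⁻ one has d(x,y) > 3E; in particular the half-spaces h⁺ and h⁻ are disjoint. -/
universe u

/-- A geodesic parametrised on `[0, A]`: an isometric embedding of `[0, A]` into `X`. -/
def IsGeodesicOn {X : Type u} [MetricSpace X] (α : ℝ → X) (A : ℝ) : Prop :=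
  0 ≤ A ∧ ∀ s ∈ Set.Icc (0 : ℝ) A, ∀ t ∈ Set.Icc (0 : ℝ) A, dist (α s) (α t) = |s - t|

/-- A geodesic metric space: any two points are joined by a geodesic. -/
def IsGeodesicSpace (X : Type u) [MetricSpace X] : Prop :=
  ∀ x y : X, ∃ α : ℝ → X, IsGeodesicOn α (dist x y) ∧ α 0 = x ∧ α (dist x y) = y

/-- `E`-hyperbolicity: every geodesic triangle is `E`-slim, i.e. each side is contained in
the closed `E`-neighbourhood of the union of the other two sides. -/
def SlimTriangles (X : Type u) [MetricSpace X] (E : ℝ) : Prop :=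
  ∀ (x y z : X) (α β γ : ℝ → X),
    IsGeodesicOn α (dist x y) → α 0 = x → α (dist x y) = y →
    IsGeodesicOn β (dist y z) → β 0 = y → β (dist y z) = z →
    IsGeodesicOn γ (dist x z) → γ 0 = x → γ (dist x z) = z →
    (∀ s ∈ Set.Icc (0 : ℝ) (dist x y),
      ∃ w ∈ β '' Set.Icc (0 : ℝ) (dist y z) ∪ γ '' Set.Icc (0 : ℝ) (dist x z),
        dist (α s) w ≤ E) ∧
    (∀ s ∈ Set.Icc (0 : ℝ) (dist y z),
      ∃ w ∈ α '' Set.Icc (0 : ℝ) (dist x y) ∪ γ '' Set.Icc (0 : ℝ) (dist x z),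
        dist (β s) w ≤ E) ∧
    (∀ s ∈ Set.Icc (0 : ℝ) (dist x z),
      ∃ w ∈ α '' Set.Icc (0 : ℝ) (dist x y) ∪ β '' Set.Icc (0 : ℝ) (dist y z),
        dist (γ s) w ≤ E)

/-- A nearest-point projection for the geodesic `α : [0,A] → X`:
`d(x, α (p x)) = inf_{t ∈ [0,A]} d(x, α t)` for every `x`. -/
def IsNearestProj {X : Type u} [MetricSpace X] (α : ℝ → X) (A : ℝ) (p : X → ℝ) : Prop :=
  ∀ x : X, p x ∈ Set.Icc (0 : ℝ) A ∧ ∀ t ∈ Set.Icc (0 : ℝ) A, dist x (α (p x)) ≤ dist x (α t)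

/-- A `(q,q)`-quasi-geodesic parametrised on `[s, t]`. -/
def IsQuasiGeodesicOn {X : Type u} [MetricSpace X] (q : ℝ) (γ : ℝ → X) (s t : ℝ) : Prop :=
  s ≤ t ∧ ∀ u ∈ Set.Icc s t, ∀ v ∈ Set.Icc s t,
    (1 / q) * |u - v| - q ≤ dist (γ u) (γ v) ∧ dist (γ u) (γ v) ≤ q * |u - v| + q

/-- A curtain in `X` dual to the geodesic `geo : [0, len] → X` at the interval
`[a, a + 6E]` (with `0 < a` and `a + 6E < len`), with respect to the
nearest-point projection `proj`. -/
structure Curtain (X : Type u) [MetricSpace X] (E : ℝ) where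
  geo : ℝ → X
  len : ℝ
  proj : X → ℝ
  a : ℝ
  isGeod : IsGeodesicOn geo len
  isProj : IsNearestProj geo len proj
  a_pos : 0 < a
  a_lt : a + 6 * E < len

namespace Curtain

variable {X : Type u} [MetricSpace X] {E : ℝ}

/-- The curtain itself: `h = p⁻¹([a, a+6E])`. -/
def core (c : Curtain X E) : Set X := {z : X | c.proj z ∈ Set.Icc c.a (c.a + 6 * E)}

/-- The half-space `h⁺ = p⁻¹([0, a))`. -/
def pos (c : Curtain X E) : Set X := {z : X | c.proj z ∈ Set.Ico 0 c.a}

/-- The half-space `h⁻ = p⁻¹((a+6E, A])`. -/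
def neg (c : Curtain X E) : Set X := {z : X | c.proj z ∈ Set.Ioc (c.a + 6 * E) c.len}

/-- The defining projection is `(1,E)`-coarsely Lipschitz. -/
def lip (c : Curtain X E) : Prop := ∀ x y : X, |c.proj x - c.proj y| ≤ dist x y + E

end Curtain

/-- The stable translation length of `f`, based at `x`:
`τ(f) = lim_{k → ∞} d(x, fᵏ x) / k`. -/
noncomputable def stableTransLen {X : Type u} [MetricSpace X] (f : X → X) (x : X) : ℝ :=
  Filter.limUnder Filter.atTop (fun k : ℕ => dist x (f^[k] x) / (k : ℝ))

/-- If `h` is a curtain dual to a geodesic with respect to a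
`(1,E)`-coarsely Lipschitz nearest-point projection, then any point of `h⁺` and any point of
`h⁻` are at distance more than `3E`; in particular the half-spaces are disjoint. -/
theorem statement3 {X : Type u} [MetricSpace X] (E : ℝ) (hE : 0 < E)
    (c : Curtain X E) (hlip : c.lip) :
    (∀ x ∈ c.pos, ∀ y ∈ c.neg, 3 * E < dist x y) ∧ c.pos ∩ c.neg = ∅ := by
  have key : ∀ x ∈ c.pos, ∀ y ∈ c.neg, 3 * E < dist x y := by
    intro x hx y hy
    have hx' : c.proj x < c.a := hx.2
    have hy' : c.a + 6 * E < c.proj y := hy.1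
    have h6 : 6 * E < |c.proj x - c.proj y| := by
      rw [abs_sub_comm, abs_of_pos (by linarith)]
      linarith
    have := hlip x y
    linarith
  refine ⟨key, ?_⟩
  ext z
  simp only [Set.mem_inter_iff, Set.mem_empty_iff_false, iff_false]
  rintro ⟨hz1, hz2⟩
  have := key z hz1 z hz2
  simp at this
  linarith
end

section
/- Let X be a metric space, E > 0, α : [0,A] → X a geodesic, p a (1,E)-coarsely Lipschitz nearest-point projection for α, and h the curtain dual to α at an interval I = [a, a+6E] with half-spaces h⁺ and h⁻. Then X = h⁺ ∪ h ∪ h⁻, and every continuous path γ : [0,1] → X with γ(0) ∈ h⁺ and γ(1) ∈ h⁻ contains a point of h; that is, the curtain h separates its two half-spaces. -/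
universe u

/-- curtains separate. If `h` is a curtain dual to a geodesic with respect
to a `(1,E)`-coarsely Lipschitz nearest-point projection, then `X = h⁺ ∪ h ∪ h⁻`, and every
continuous path from a point of `h⁺` to a point of `h⁻` meets the curtain `h`. -/
theorem statement4 {X : Type u} [MetricSpace X] (E : ℝ) (hE : 0 < E)
    (c : Curtain X E) (hlip : c.lip) :
    c.pos ∪ c.core ∪ c.neg = Set.univ ∧
    ∀ γ : ℝ → X, ContinuousOn γ (Set.Icc (0 : ℝ) 1) →
      γ 0 ∈ c.pos → γ 1 ∈ c.neg → ∃ t ∈ Set.Icc (0 : ℝ) 1, γ t ∈ c.core := by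
  constructor
  · ext x
    simp only [Set.mem_union, Set.mem_univ, iff_true, Curtain.pos, Curtain.core,
      Curtain.neg, Set.mem_setOf_eq, Set.mem_Ico, Set.mem_Icc, Set.mem_Ioc]
    have hx := (c.isProj x).1
    rcases lt_or_ge (c.proj x) c.a with h | h
    · exact Or.inl (Or.inl ⟨hx.1, h⟩)
    rcases le_or_gt (c.proj x) (c.a + 6 * E) with h2 | h2
    · exact Or.inl (Or.inr ⟨h, h2⟩)
    · exact Or.inr ⟨h2, hx.2⟩
  · intro γ hγ h0 h1
    by_contra hcon
    push_neg at hcon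
    have tri : ∀ t ∈ Set.Icc (0:ℝ) 1, c.proj (γ t) < c.a ∨ c.a + 6 * E < c.proj (γ t) := by
      intro t ht
      rcases lt_or_ge (c.proj (γ t)) c.a with h | h
      · exact Or.inl h
      rcases le_or_gt (c.proj (γ t)) (c.a + 6 * E) with h2 | h2
      · exact absurd ⟨h, h2⟩ (hcon t ht)
      · exact Or.inr h2
    set S := {t : ℝ | t ∈ Set.Icc (0:ℝ) 1 ∧ c.proj (γ t) < c.a} with hSdef
    have h0S : (0:ℝ) ∈ S := ⟨⟨le_refl 0, zero_le_one⟩, h0.2⟩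
    have hne : S.Nonempty := ⟨0, h0S⟩
    have hbdd : BddAbove S := ⟨1, fun t ht => ht.1.2⟩
    set s := sSup S with hs
    have hs0 : 0 ≤ s := le_csSup hbdd h0S
    have hs1 : s ≤ 1 := csSup_le hne (fun t ht => ht.1.2)
    have hsmem : s ∈ Set.Icc (0:ℝ) 1 := ⟨hs0, hs1⟩
    have hcont : ContinuousWithinAt γ (Set.Icc 0 1) s := hγ s hsmem
    rw [Metric.continuousWithinAt_iff] at hcont
    obtain ⟨δ, hδ, hδ2⟩ := hcont E hE
    have hsa : c.proj (γ s) < c.a := by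
      by_contra hge
      push_neg at hge
      have hneg : c.a + 6 * E < c.proj (γ s) :=
        (tri s hsmem).resolve_left (not_lt.mpr hge)
      obtain ⟨t, htS, htl⟩ := exists_lt_of_lt_csSup hne (show s - δ < s by linarith)
      have hts : t ≤ s := le_csSup hbdd htS
      have hdist : dist t s < δ := by
        rw [Real.dist_eq, abs_lt]; constructor <;> linarith
      have hclose : dist (γ t) (γ s) < E := hδ2 htS.1 hdist
      have hl := hlip (γ s) (γ t)
      rw [dist_comm (γ s) (γ t)] at hl
      have habs : c.proj (γ s) - c.proj (γ t) ≤ |c.proj (γ s) - c.proj (γ t)| :=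
        le_abs_self _
      have : c.proj (γ t) < c.a := htS.2
      linarith
    have hslt1 : s < 1 := by
      rcases lt_or_eq_of_le hs1 with h | h
      · exact h
      · exfalso; rw [h] at hsa; have := h1.1; linarith
    set t := min (s + δ / 2) 1 with ht
    have hst : s < t := lt_min (by linarith) hslt1
    have htmem : t ∈ Set.Icc (0:ℝ) 1 := ⟨le_of_lt (lt_of_le_of_lt hs0 hst), min_le_right _ _⟩
    have hdist : dist t s < δ := by
      rw [Real.dist_eq, abs_lt]
      constructor
      · linarith
      · have : t ≤ s + δ / 2 := min_le_left _ _
        linarith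
    have hclose : dist (γ t) (γ s) < E := hδ2 htmem hdist
    have htnS : t ∉ S := fun hmem => absurd (le_csSup hbdd hmem) (not_le.mpr hst)
    have htneg : c.a + 6 * E < c.proj (γ t) := by
      rcases tri t htmem with h | h
      · exact absurd ⟨htmem, h⟩ htnS
      · exact h
    have hl := hlip (γ t) (γ s)
    have habs : c.proj (γ t) - c.proj (γ s) ≤ |c.proj (γ t) - c.proj (γ s)| := le_abs_self _
    linarith
end

section
/- Let X be a geodesic metric space, E > 0, and x, y ∈ X. Suppose h₁, …, h_n is a chain of curtains in X (each h_i dual to some geodesic with respect to a (1,E)-coarsely Lipschitz nearest-point projection) such that every h_i separates x from y, i.e. x ∈ h_i⁺ and y ∈ h_i⁻ for all i. Then d(x,y) ≥ E·n. -/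
universe u

/-- If `h₁, …, h_n` is a chain of curtains (each dual to some geodesic with
respect to a `(1,E)`-coarsely Lipschitz nearest-point projection) and every `h_i` separates
`x` from `y` (i.e. `x ∈ h_i⁺` and `y ∈ h_i⁻`), then `d(x,y) ≥ E·n`. -/
theorem statement5 {X : Type u} [MetricSpace X] (hX : IsGeodesicSpace X)
    (E : ℝ) (hE : 0 < E) (x y : X) (n : ℕ) (c : ℕ → Curtain X E)
    (hlip : ∀ i : ℕ, 1 ≤ i → i ≤ n → (c i).lip)
    (hsep : ∀ i : ℕ, 1 ≤ i → i ≤ n → x ∈ (c i).pos ∧ y ∈ (c i).neg)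
    (hchain : ∀ i : ℕ, 1 < i → i < n →
      (c (i - 1)).core ⊆ (c i).pos ∧ (c (i + 1)).core ⊆ (c i).neg) :
    E * n ≤ dist x y := by
  classical
  rcases Nat.eq_zero_or_pos n with hn0 | hnpos
  · simp [hn0, dist_nonneg]
  obtain ⟨α, hα, hα0, hαD⟩ := hX x y
  set D := dist x y with hDdef
  have hD0 : 0 ≤ D := dist_nonneg
  set S : ℕ → Set ℝ := fun i => {t | t ∈ Set.Icc (0:ℝ) D ∧ α t ∈ (c i).pos} with hSdef
  set N : ℕ → Set ℝ := fun i => {t | t ∈ Set.Icc (0:ℝ) D ∧ α t ∈ (c i).neg} with hNdef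
  set u : ℕ → ℝ := fun i => sInf (N i) with hudef
  set s : ℕ → ℝ := fun i => sSup (S i ∩ Set.Iic (u i)) with hsdef
  -- key separation estimate
  have key : ∀ i, 1 ≤ i → i ≤ n → ∀ t ∈ S i, ∀ t' ∈ N i, t ≤ t' → t + 5*E ≤ t' := by
    intro i h1 h2 t ht t' ht' htt
    have hdist : dist (α t) (α t') = |t - t'| := hα.2 t ht.1 t' ht'.1
    have hl := hlip i h1 h2 (α t) (α t')
    have habs : (c i).proj (α t') - (c i).proj (α t) ≤ |(c i).proj (α t) - (c i).proj (α t')| := by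
      rw [abs_sub_comm]; exact le_abs_self _
    have hpos : (c i).proj (α t) < (c i).a := ht.2.2
    have hneg : (c i).a + 6*E < (c i).proj (α t') := ht'.2.1
    have habst : |t - t'| = t' - t := by
      rw [abs_sub_comm]; exact abs_of_nonneg (by linarith)
    rw [hdist, habst] at hl
    linarith
  have hDN : ∀ i, 1 ≤ i → i ≤ n → D ∈ N i := by
    intro i h1 h2
    exact ⟨⟨hD0, le_refl D⟩, by rw [hαD]; exact (hsep i h1 h2).2⟩
  have hbN : ∀ i, BddBelow (N i) := by
    intro i; exact ⟨0, fun t ht => ht.1.1⟩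
  have hNne : ∀ i, 1 ≤ i → i ≤ n → (N i).Nonempty := fun i h1 h2 => ⟨D, hDN i h1 h2⟩
  have huD : ∀ i, 1 ≤ i → i ≤ n → u i ≤ D := fun i h1 h2 => csInf_le (hbN i) (hDN i h1 h2)
  have hu0 : ∀ i, 1 ≤ i → i ≤ n → 0 ≤ u i := by
    intro i h1 h2
    exact le_csInf (hNne i h1 h2) (fun t ht => ht.1.1)
  have h0S : ∀ i, 1 ≤ i → i ≤ n → (0:ℝ) ∈ S i ∩ Set.Iic (u i) := by
    intro i h1 h2
    exact ⟨⟨⟨le_refl 0, hD0⟩, by rw [hα0]; exact (hsep i h1 h2).1⟩, hu0 i h1 h2⟩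
  have hbS : ∀ i, BddAbove (S i ∩ Set.Iic (u i)) := by
    intro i; exact ⟨u i, fun t ht => ht.2⟩
  have hs0 : ∀ i, 1 ≤ i → i ≤ n → 0 ≤ s i := by
    intro i h1 h2
    exact le_csSup (hbS i) (h0S i h1 h2)
  have hgap : ∀ i, 1 ≤ i → i ≤ n → s i + 5*E ≤ u i := by
    intro i h1 h2
    have : s i ≤ u i - 5*E := by
      apply csSup_le ⟨0, h0S i h1 h2⟩
      intro t ht
      have : t + 5*E ≤ u i := by
        apply le_csInf (hNne i h1 h2)
        intro t' ht'
        have htu : u i ≤ t' := csInf_le (hbN i) ht'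
        exact key i h1 h2 t ht.1 t' ht' (le_trans ht.2 htu)
      linarith
    linarith
  -- points strictly between s i and u i lie in the core of c i
  have hcore : ∀ i, 1 ≤ i → i ≤ n → ∀ t, s i < t → t < u i → α t ∈ (c i).core := by
    intro i h1 h2 t hst htu
    have ht0 : 0 ≤ t := le_trans (hs0 i h1 h2) (le_of_lt hst)
    have htD : t ≤ D := le_trans (le_of_lt htu) (huD i h1 h2)
    have hnN : α t ∉ (c i).neg := by
      intro hmem
      exact absurd (csInf_le (hbN i) ⟨⟨ht0, htD⟩, hmem⟩) (not_le.mpr htu)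
    have hnS : α t ∉ (c i).pos := by
      intro hmem
      exact absurd (le_csSup (hbS i) ⟨⟨⟨ht0, htD⟩, hmem⟩, le_of_lt htu⟩) (not_le.mpr hst)
    have hproj := ((c i).isProj (α t)).1
    have hp0 : 0 ≤ (c i).proj (α t) := hproj.1
    have hplen : (c i).proj (α t) ≤ (c i).len := hproj.2
    have hge : (c i).a ≤ (c i).proj (α t) := by
      by_contra hlt
      exact hnS ⟨hp0, lt_of_not_ge hlt⟩
    have hle : (c i).proj (α t) ≤ (c i).a + 6*E := by
      by_contra hgt
      exact hnN ⟨lt_of_not_ge hgt, hplen⟩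
    exact ⟨hge, hle⟩
  -- the midpoint-ish parameter s i + 2E is in the core
  have hcoreT : ∀ i, 1 ≤ i → i ≤ n → α (s i + 2*E) ∈ (c i).core ∧
      (s i + 2*E) ∈ Set.Icc (0:ℝ) D := by
    intro i h1 h2
    have h1' : s i < s i + 2*E := by linarith
    have h2' : s i + 2*E < u i := by have := hgap i h1 h2; linarith
    refine ⟨hcore i h1 h2 _ h1' h2', ⟨by have := hs0 i h1 h2; linarith,
      le_trans (le_of_lt h2') (huD i h1 h2)⟩⟩
  -- chain recurrence: u (i+1) ≥ u i + 3E for 1 < i < n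
  have hrec : ∀ i, 1 < i → i < n → u i + 3*E ≤ u (i+1) := by
    intro i hi1 hin
    have hi1' : 1 ≤ i + 1 := by omega
    have hin' : i + 1 ≤ n := by omega
    obtain ⟨hcmem, hIcc⟩ := hcoreT (i+1) hi1' hin'
    have hneg : α (s (i+1) + 2*E) ∈ (c i).neg := (hchain i hi1 hin).2 hcmem
    have : u i ≤ s (i+1) + 2*E := csInf_le (hbN i) ⟨hIcc, hneg⟩
    have := hgap (i+1) hi1' hin'
    linarith
  rcases Nat.lt_or_ge n 2 with hn2 | hn2
  · -- n = 1
    have hn1 : n = 1 := by omega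
    subst hn1
    have h1 : s 1 + 5*E ≤ u 1 := hgap 1 le_rfl le_rfl
    have h2 : u 1 ≤ D := huD 1 le_rfl le_rfl
    have h3 : 0 ≤ s 1 := hs0 1 le_rfl le_rfl
    push_cast
    linarith
  · -- n ≥ 2 : induction u k ≥ 3E*k - E for 2 ≤ k ≤ n
    have hind : ∀ k, 2 ≤ k → k ≤ n → 3*E*k - E ≤ u k := by
      intro k
      induction k with
      | zero => omega
      | succ m ih =>
        intro hk2 hkn
        rcases Nat.lt_or_ge m 2 with hm2 | hm2
        · have hm : m = 1 := by omega
          subst hm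
          have h1 : s 2 + 5*E ≤ u 2 := hgap 2 (by omega) hkn
          have h3 : 0 ≤ s 2 := hs0 2 (by omega) hkn
          push_cast
          linarith
        · have hmn : m < n := by omega
          have := hrec m (by omega) hmn
          have := ih hm2 (by omega)
          push_cast
          push_cast at this
          linarith
    have h1 := hind n hn2 le_rfl
    have h2 := huD n (by omega) le_rfl
    have hn1 : (1:ℝ) ≤ (n:ℝ) := by exact_mod_cast hnpos
    nlinarith [hE, hn1]
end

section
/- Let X be a geodesic metric space, E > 0, x, y ∈ X, β : [0,d] → X a geodesic from x to y (so d = d(x,y)), and p a (1,E)-coarsely Lipschitz nearest-point projection for β. If d ≥ 8E(n+1) for some n ≥ 1, then the curtains h₁, …, h_n dual to β at the intervals I_i = [(8i−6)E, 8iE] (i = 1, …, n) form a chain of curtains, each of which separates x from y. In particular, any two points x, y ∈ X are separated by a chain of curtains of cardinality at least ⌊d(x,y)/(8E)⌋ − 1. -/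
universe u

lemma exists_nearest_proj {X : Type u} [MetricSpace X] (β : ℝ → X) (A : ℝ)
    (h : IsGeodesicOn β A) : ∃ p, IsNearestProj β A p := by
  obtain ⟨hA, hiso⟩ := h
  have hcont : ContinuousOn β (Set.Icc 0 A) := by
    apply (LipschitzOnWith.of_dist_le_mul (K := 1) ?_).continuousOn
    intro s hs t ht
    rw [hiso s hs t ht]
    simp [Real.dist_eq]
  have key : ∀ z : X, ∃ t ∈ Set.Icc (0:ℝ) A, ∀ u ∈ Set.Icc (0:ℝ) A,
      dist z (β t) ≤ dist z (β u) := by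
    intro z
    obtain ⟨t, ht, hmin⟩ := isCompact_Icc.exists_isMinOn (Set.nonempty_Icc.2 hA)
      (((continuous_const.dist continuous_id).comp_continuousOn hcont) :
        ContinuousOn (fun t => dist z (β t)) _)
    exact ⟨t, ht, fun u hu => hmin hu⟩
  choose p hp1 hp2 using key
  exact ⟨p, fun z => ⟨hp1 z, hp2 z⟩⟩

lemma chain_main {X : Type u} [MetricSpace X] {E : ℝ} (hE : 0 < E) (x y : X) (β : ℝ → X)
    (hβ : IsGeodesicOn β (dist x y)) (hβ0 : β 0 = x) (hβ1 : β (dist x y) = y)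
    (p : X → ℝ) (hp : IsNearestProj β (dist x y) p)
    (n : ℕ) (hn : 1 ≤ n) (hd : 8 * E * (n + 1) ≤ dist x y) :
    ∃ c : ℕ → Curtain X E,
      (∀ i : ℕ, 1 ≤ i → i ≤ n →
        (c i).geo = β ∧ (c i).len = dist x y ∧ (c i).proj = p ∧
          (c i).a = (8 * (i : ℝ) - 6) * E) ∧
      (∀ i : ℕ, 1 ≤ i → i ≤ n → x ∈ (c i).pos ∧ y ∈ (c i).neg) ∧
      (∀ i : ℕ, 1 < i → i < n →
        (c (i - 1)).core ⊆ (c i).pos ∧ (c (i + 1)).core ⊆ (c i).neg) := by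
  set d := dist x y with hdd
  have hd0 : (0:ℝ) ∈ Set.Icc (0:ℝ) d := ⟨le_refl 0, dist_nonneg⟩
  have hdmem : d ∈ Set.Icc (0:ℝ) d := ⟨dist_nonneg, le_refl d⟩
  -- p x = 0
  have hpx : p x = 0 := by
    have h1 : dist x (β (p x)) ≤ 0 := by
      have := (hp x).2 0 hd0
      rwa [hβ0, dist_self] at this
    have h2 : β (p x) = x := by
      have := le_antisymm h1 dist_nonneg
      exact (dist_eq_zero.mp this).symm
    have h3 := hβ.2 (p x) (hp x).1 0 hd0
    rw [h2, hβ0, dist_self] at h3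
    have : |p x - 0| = 0 := h3.symm
    simpa using abs_eq_zero.mp this
  have hpy : p y = d := by
    have h1 : dist y (β (p y)) ≤ 0 := by
      have := (hp y).2 d hdmem
      rwa [hβ1, dist_self] at this
    have h2 : β (p y) = y := by
      have := le_antisymm h1 dist_nonneg
      exact (dist_eq_zero.mp this).symm
    have h3 := hβ.2 (p y) (hp y).1 d hdmem
    rw [h2, hβ1, dist_self] at h3
    have : |p y - d| = 0 := h3.symm
    have := abs_eq_zero.mp this
    linarith [sub_eq_zero.mp this]
  -- the clamped index
  have hjb : ∀ i : ℕ, 1 ≤ max 1 (min i n) ∧ max 1 (min i n) ≤ n := fun i => ⟨le_max_left _ _, by omega⟩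
  have hapos : ∀ i : ℕ, 0 < (8 * ((max 1 (min i n) : ℕ) : ℝ) - 6) * E := by
    intro i
    have h1 : (1:ℝ) ≤ ((max 1 (min i n) : ℕ) : ℝ) := by exact_mod_cast (hjb i).1
    nlinarith
  have halt : ∀ i : ℕ, (8 * ((max 1 (min i n) : ℕ) : ℝ) - 6) * E + 6 * E < d := by
    intro i
    have h1 : ((max 1 (min i n) : ℕ) : ℝ) ≤ (n : ℝ) := by exact_mod_cast (hjb i).2
    nlinarith
  refine ⟨fun i => ⟨β, d, p, (8 * ((max 1 (min i n) : ℕ) : ℝ) - 6) * E, hβ, hp,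
    hapos i, halt i⟩, ?_, ?_, ?_⟩
  · intro i h1 h2
    dsimp only
    have : max 1 (min i n) = i := by omega
    rw [this]
    exact ⟨rfl, rfl, rfl, rfl⟩
  · intro i h1 h2
    have hmi : max 1 (min i n) = i := by omega
    have hi1 : (1:ℝ) ≤ (i:ℝ) := by exact_mod_cast h1
    have hin : (i:ℝ) ≤ (n:ℝ) := by exact_mod_cast h2
    dsimp only [Curtain.pos, Curtain.neg]
    constructor
    · show p x ∈ Set.Ico (0:ℝ) _
      rw [hpx]
      refine ⟨le_refl 0, ?_⟩
      rw [hmi]; nlinarith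
    · show p y ∈ Set.Ioc _ d
      rw [hpy, hmi]
      exact ⟨by nlinarith, le_refl d⟩
  · intro i h1 h2
    have e1 : max 1 (min (i-1) n) = i - 1 := by omega
    have e2 : max 1 (min i n) = i := by omega
    have e3 : max 1 (min (i+1) n) = i + 1 := by omega
    have c1 : ((i - 1 : ℕ) : ℝ) = (i : ℝ) - 1 := by
      have : 1 ≤ i := by omega
      push_cast [Nat.cast_sub this]; ring
    have c3 : ((i + 1 : ℕ) : ℝ) = (i : ℝ) + 1 := by push_cast; ring
    constructor
    · intro z hz
      simp only [Curtain.core, Set.mem_setOf_eq, Set.mem_Icc, e1] at hz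
      show p z ∈ Set.Ico (0:ℝ) _
      dsimp only
      rw [e2]
      refine ⟨(hp z).1.1, ?_⟩
      rw [c1] at hz
      nlinarith [hz.2]
    · intro z hz
      simp only [Curtain.core, Set.mem_setOf_eq, Set.mem_Icc, e3] at hz
      show p z ∈ Set.Ioc _ d
      dsimp only
      rw [e2]
      refine ⟨?_, (hp z).1.2⟩
      rw [c3] at hz
      nlinarith [hz.1]

/-- If `β : [0,d] → X` is a geodesic from `x` to `y` (`d = d(x,y)`) with
`(1,E)`-coarsely Lipschitz nearest-point projection `p`, and `d ≥ 8E(n+1)` with `n ≥ 1`,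
then the curtains dual to `β` at the intervals `I_i = [(8i−6)E, 8iE]`, `i = 1, …, n`, form a
chain of curtains each of which separates `x` from `y`. In particular, any two points
`x', y'` are separated by a chain of curtains of cardinality at least `⌊d(x',y')/(8E)⌋ − 1`. -/
theorem statement6 {X : Type u} [MetricSpace X] (hX : IsGeodesicSpace X)
    (E : ℝ) (hE : 0 < E) (x y : X) (β : ℝ → X)
    (hβ : IsGeodesicOn β (dist x y)) (hβ0 : β 0 = x) (hβ1 : β (dist x y) = y)
    (p : X → ℝ) (hp : IsNearestProj β (dist x y) p)
    (hlip : ∀ z w : X, |p z - p w| ≤ dist z w + E)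
    (n : ℕ) (hn : 1 ≤ n) (hd : 8 * E * (n + 1) ≤ dist x y) :
    (∃ c : ℕ → Curtain X E,
      (∀ i : ℕ, 1 ≤ i → i ≤ n →
        (c i).geo = β ∧ (c i).len = dist x y ∧ (c i).proj = p ∧
          (c i).a = (8 * (i : ℝ) - 6) * E) ∧
      (∀ i : ℕ, 1 ≤ i → i ≤ n → x ∈ (c i).pos ∧ y ∈ (c i).neg) ∧
      (∀ i : ℕ, 1 < i → i < n →
        (c (i - 1)).core ⊆ (c i).pos ∧ (c (i + 1)).core ⊆ (c i).neg)) ∧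
    (∀ x' y' : X, ∃ (m : ℕ) (c : Fin m → Curtain X E),
      (⌊dist x' y' / (8 * E)⌋ : ℝ) - 1 ≤ (m : ℝ) ∧
      (∀ i : Fin m, x' ∈ (c i).pos ∧ y' ∈ (c i).neg) ∧
      (∀ (i : ℕ) (h0 : i < m) (h1 : i + 1 < m) (h2 : i + 2 < m),
        (c ⟨i, h0⟩).core ⊆ (c ⟨i + 1, h1⟩).pos ∧
          (c ⟨i + 2, h2⟩).core ⊆ (c ⟨i + 1, h1⟩).neg)) := by
  constructor
  · exact chain_main hE x y β hβ hβ0 hβ1 p hp n hn hd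
  · intro x' y'
    obtain ⟨β', hβ', h0', h1'⟩ := hX x' y'
    obtain ⟨p', hp'⟩ := exists_nearest_proj β' _ hβ'
    set k := ⌊dist x' y' / (8 * E)⌋ with hk
    by_cases hk1 : k ≤ 1
    · refine ⟨0, Fin.elim0, ?_, fun i => i.elim0, fun i h0 _ _ => absurd h0 (Nat.not_lt_zero i)⟩
      have hc : (k:ℝ) ≤ 1 := by exact_mod_cast hk1
      simp only [Nat.cast_zero]
      linarith
    · push_neg at hk1
      have hk2 : 2 ≤ k := hk1
      set n' := (k - 1).toNat with hn'
      have hn1 : 1 ≤ n' := by omega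
      have hcast : (n':ℝ) = (k:ℝ) - 1 := by
        have h := Int.toNat_of_nonneg (by omega : (0:ℤ) ≤ k - 1)
        rw [hn']
        have : (((k-1).toNat : ℤ) : ℝ) = (((k:ℤ) - 1 : ℤ) : ℝ) := congrArg (fun z : ℤ => (z:ℝ)) h
        push_cast at this
        linarith
      have hkle : (k:ℝ) ≤ dist x' y' / (8*E) := Int.floor_le _
      have h8 : (0:ℝ) < 8 * E := by linarith
      have hd' : 8 * E * (n' + 1) ≤ dist x' y' := by
        rw [hcast]
        calc 8*E*((k:ℝ)-1+1) = 8*E*(k:ℝ) := by ring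
        _ ≤ 8*E*(dist x' y'/(8*E)) := by nlinarith
        _ = dist x' y' := by field_simp
      obtain ⟨c', _, hsep, hchain⟩ := chain_main hE x' y' β' hβ' h0' h1' p' hp' n' hn1 hd'
      refine ⟨n', fun i => c' (i.val + 1), by rw [hcast], ?_, ?_⟩
      · intro i
        exact hsep (i.val + 1) (by omega) (by omega)
      · intro i h0 h1 h2
        have h := hchain (i + 2) (by omega) h2
        have e1 : i + 2 - 1 = i + 1 := by omega
        have e2 : i + 1 + 1 = i + 2 := by omega
        rw [e1] at h
        dsimp only
        rw [e2]
        exact h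
end

section
/- Let X be a geodesic metric space, E > 0, and h a curtain in X dual to a geodesic α with respect to a (1,E)-coarsely Lipschitz nearest-point projection p, with half-spaces h⁺ and h⁻. Let w be an isometry of X and n ≥ 1 an integer such that wⁿ(h ∪ h⁺) ⊆ h⁺ (so in particular wⁿ(h) ∩ h = ∅ and wⁿ(h⁺) ⊊ h⁺). Then for every x ∈ h and every integer i ≥ 1, d(x, w^{ni} x) ≥ E(i−1); consequently the stable translation length satisfies τ(wⁿ) ≥ E and τ(w) ≥ E/n > 0, so w is loxodromic. -/
universe u

open Filter Topology

private lemma iterDistAux {X : Type u} [MetricSpace X] {f : X → X}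
    (hf : ∀ u v : X, dist (f u) (f v) = dist u v) :
    ∀ (m : ℕ) (u v : X), dist (f^[m] u) (f^[m] v) = dist u v := by
  intro m
  induction m with
  | zero => intro u v; simp
  | succ m ih =>
    intro u v
    rw [Function.iterate_succ_apply', Function.iterate_succ_apply', hf, ih]

private lemma le_stableTransLen_aux {X : Type u} [MetricSpace X] (f : X → X)
    (hf : ∀ u v : X, dist (f u) (f v) = dist u v) (x : X) (L C : ℝ)
    (hlb : ∀ k : ℕ, L * k - C ≤ dist x (f^[k] x)) :
    L ≤ stableTransLen f x := by
  have hiter := iterDistAux hf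
  have hsub : Subadditive (fun k : ℕ => dist x (f^[k] x)) := by
    intro m k
    have h1 : f^[m + k] x = f^[m] (f^[k] x) := Function.iterate_add_apply f m k x
    calc dist x (f^[m + k] x)
        ≤ dist x (f^[m] x) + dist (f^[m] x) (f^[m + k] x) := dist_triangle _ _ _
      _ = dist x (f^[m] x) + dist x (f^[k] x) := by rw [h1, hiter m]
  have hbdd : BddBelow (Set.range fun k : ℕ => dist x (f^[k] x) / k) := by
    refine ⟨0, ?_⟩
    rintro r ⟨k, rfl⟩
    positivity
  have hT := hsub.tendsto_lim hbdd
  have heq : stableTransLen f x = hsub.lim := hT.limUnder_eq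
  rw [heq]
  have hTg : Filter.Tendsto (fun k : ℕ => L - C / k) Filter.atTop (nhds L) := by
    have h0 := tendsto_const_div_atTop_nhds_zero_nat C
    simpa using Filter.Tendsto.sub (tendsto_const_nhds (x := L)) h0
  refine le_of_tendsto_of_tendsto hTg hT ?_
  filter_upwards [Filter.eventually_ge_atTop 1] with k hk
  have hk0 : (0:ℝ) < (k:ℝ) := by exact_mod_cast hk
  show L - C / k ≤ dist x (f^[k] x) / k
  rw [le_div_iff₀ hk0]
  have hring : (L - C / k) * k = L * k - C := by field_simp
  rw [hring]
  exact hlb k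


/-- If `w` is an isometry of a geodesic space `X` with `wⁿ(h ∪ h⁺) ⊆ h⁺`
for a curtain `h` (with `(1,E)`-coarsely Lipschitz projection) and some `n ≥ 1`, then
`d(x, w^{ni} x) ≥ E(i−1)` for every `x ∈ h` and `i ≥ 1`; consequently `τ(wⁿ) ≥ E` and
`τ(w) ≥ E/n > 0`, so `w` is loxodromic. -/
theorem statement8 {X : Type u} [MetricSpace X] (hX : IsGeodesicSpace X)
    (E : ℝ) (hE : 0 < E) (c : Curtain X E) (hlip : c.lip)
    (w : X ≃ᵢ X) (n : ℕ) (hn : 1 ≤ n)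
    (hskew : (⇑w)^[n] '' (c.core ∪ c.pos) ⊆ c.pos) :
    (∀ x ∈ c.core, ∀ i : ℕ, 1 ≤ i → E * ((i : ℝ) - 1) ≤ dist x ((⇑w)^[n * i] x)) ∧
    (∀ x : X, E ≤ stableTransLen ((⇑w)^[n]) x) ∧
    (∀ x : X, E / (n : ℝ) ≤ stableTransLen (⇑w) x) ∧
    0 < E / (n : ℝ) := by
  -- basic notation
  have hq0 : ∀ z : X, 0 ≤ c.proj z := fun z => (c.isProj z).1.1
  have step : ∀ z : X, c.proj z ≤ c.a + 6 * E → c.proj ((⇑w)^[n] z) < c.a := by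
    intro z hz
    have hz' : z ∈ c.core ∪ c.pos := by
      by_cases h : c.proj z < c.a
      · exact Or.inr ⟨hq0 z, h⟩
      · exact Or.inl ⟨le_of_not_gt h, hz⟩
    exact (hskew (Set.mem_image_of_mem _ hz')).2
  have iter_pos : ∀ m : ℕ, 1 ≤ m → ∀ z : X, c.proj z ≤ c.a + 6 * E →
      c.proj ((⇑w)^[n * m] z) < c.a := by
    intro m
    induction m with
    | zero => omega
    | succ m ih =>
      intro _ z hz
      rcases Nat.eq_zero_or_pos m with hm | hm
      · subst hm
        simpa using step z hz
      · have h1 := ih hm z hz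
        have h2 : (⇑w)^[n * (m + 1)] z = (⇑w)^[n] ((⇑w)^[n * m] z) := by
          rw [← Function.iterate_add_apply]
          congr 1
          ring
        rw [h2]
        exact step _ (by linarith)
  have winv : ∀ (m : ℕ) (z : X), (⇑w)^[m] ((⇑w.symm)^[m] z) = z :=
    fun m => Function.LeftInverse.iterate (fun z => w.apply_symm_apply z) m
  have winv' : ∀ (m : ℕ) (z : X), (⇑w.symm)^[m] ((⇑w)^[m] z) = z :=
    fun m => Function.LeftInverse.iterate (fun z => w.symm_apply_apply z) m
  have symm_dist : ∀ (m : ℕ) (u v : X),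
      dist ((⇑w.symm)^[m] u) ((⇑w.symm)^[m] v) = dist u v :=
    iterDistAux (fun u v => w.symm.dist_eq u v)
  have w_dist : ∀ (m : ℕ) (u v : X), dist ((⇑w)^[m] u) ((⇑w)^[m] v) = dist u v :=
    iterDistAux (fun u v => w.dist_eq u v)
  have back : ∀ m : ℕ, 1 ≤ m → ∀ z : X, c.a ≤ c.proj z →
      c.a + 6 * E < c.proj ((⇑w.symm)^[n * m] z) := by
    intro m hm z hz
    by_contra h
    push_neg at h
    have h2 := iter_pos m hm _ h
    rw [winv] at h2
    linarith
  -- the key distance estimate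
  have key : ∀ x ∈ c.core, ∀ i : ℕ, 1 ≤ i →
      E * ((i : ℝ) - 1) ≤ dist x ((⇑w)^[n * i] x) := by
    intro x hx i hi
    obtain ⟨hxa, hxb⟩ := hx
    obtain ⟨γ, hγ, hγ0, hγD⟩ := hX x ((⇑w)^[n * i] x)
    set y := (⇑w)^[n * i] x with hy
    set D := dist x y with hD
    have hD0 : 0 ≤ D := by rw [hD]; exact dist_nonneg
    have claim : ∀ k : ℕ, k + 1 ≤ i → ∃ t : ℝ, 0 ≤ t ∧ t ≤ D ∧ 5 * E * (k : ℝ) ≤ t ∧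
        c.a ≤ c.proj ((⇑w.symm)^[n * k] (γ t)) := by
      intro k
      induction k with
      | zero =>
        intro _
        refine ⟨0, le_rfl, hD0, by norm_num, ?_⟩
        simpa [hγ0] using hxa
      | succ k ih =>
        intro hk1
        obtain ⟨t, ht0, htD, htk, hta⟩ := ih (by omega)
        have hφt : c.a + 6 * E < c.proj ((⇑w.symm)^[n * (k + 1)] (γ t)) := by
          have he : n * (k + 1) = n * 1 + n * k := by ring
          rw [he, Function.iterate_add_apply]
          exact back 1 le_rfl _ hta
        have lipγ : ∀ s s' : ℝ, 0 ≤ s → s ≤ D → 0 ≤ s' → s' ≤ D →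
            |c.proj ((⇑w.symm)^[n * (k + 1)] (γ s)) -
              c.proj ((⇑w.symm)^[n * (k + 1)] (γ s'))| ≤ |s - s'| + E := by
          intro s s' h1 h2 h3 h4
          have hl := hlip ((⇑w.symm)^[n * (k + 1)] (γ s)) ((⇑w.symm)^[n * (k + 1)] (γ s'))
          rw [symm_dist (n * (k + 1)) (γ s) (γ s'), hγ.2 s ⟨h1, h2⟩ s' ⟨h3, h4⟩] at hl
          exact hl
        by_cases hcase : t + 5 * E ≤ D
        · refine ⟨t + 5 * E, by linarith, hcase, by push_cast; linarith, ?_⟩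
          have hb := lipγ t (t + 5 * E) ht0 htD (by linarith) hcase
          have habs : |t - (t + 5 * E)| = 5 * E := by
            rw [show t - (t + 5 * E) = -(5 * E) by ring, abs_neg, abs_of_nonneg (by linarith)]
          rw [habs] at hb
          have h5 := le_abs_self (c.proj ((⇑w.symm)^[n * (k + 1)] (γ t)) -
            c.proj ((⇑w.symm)^[n * (k + 1)] (γ (t + 5 * E))))
          linarith
        · exfalso
          push_neg at hcase
          have hb := lipγ t D ht0 htD hD0 le_rfl
          have habs : |t - D| ≤ 5 * E := by
            rw [abs_le]; constructor <;> linarith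
          have h5 := le_abs_self (c.proj ((⇑w.symm)^[n * (k + 1)] (γ t)) -
            c.proj ((⇑w.symm)^[n * (k + 1)] (γ D)))
          have hBa : c.a < c.proj ((⇑w.symm)^[n * (k + 1)] (γ D)) := by linarith
          have hyy : (⇑w.symm)^[n * (k + 1)] (γ D) = (⇑w)^[n * (i - (k + 1))] x := by
            rw [hγD, hy]
            have hsplit : (⇑w)^[n * i] x = (⇑w)^[n * (k + 1)] ((⇑w)^[n * (i - (k + 1))] x) := by
              rw [← Function.iterate_add_apply]
              congr 1
              rw [← Nat.mul_add]
              congr 1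
              omega
            rw [hsplit, winv']
          have hlt := iter_pos (i - (k + 1)) (by omega) x hxb
          rw [← hyy] at hlt
          linarith
    obtain ⟨t, ht0, htD, htk, -⟩ := claim (i - 1) (by omega)
    have hcast : ((i - 1 : ℕ) : ℝ) = (i : ℝ) - 1 := by
      have := Nat.cast_sub (R := ℝ) hi
      simpa using this
    rw [hcast] at htk
    have hi1 : (1 : ℝ) ≤ (i : ℝ) := by exact_mod_cast hi
    have hprod : 0 ≤ E * ((i : ℝ) - 1) := mul_nonneg hE.le (by linarith)
    linarith
  -- the base point on the geodesic
  set x₀ := c.geo c.a with hx₀def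
  have hmem : c.a ∈ Set.Icc (0:ℝ) c.len := ⟨le_of_lt c.a_pos, by linarith [c.a_lt, hE]⟩
  have hx0 : c.proj x₀ = c.a := by
    have h1 := (c.isProj x₀).2 c.a hmem
    have h2 : dist x₀ (c.geo c.a) = 0 := by rw [← hx₀def]; exact dist_self x₀
    rw [h2] at h1
    have h3 : c.geo (c.proj x₀) = x₀ := by
      have := le_antisymm h1 dist_nonneg
      exact (dist_eq_zero.mp this).symm
    have h4 := c.isGeod.2 (c.proj x₀) (c.isProj x₀).1 c.a hmem
    rw [h3, ← hx₀def, dist_self] at h4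
    have := abs_eq_zero.mp h4.symm
    linarith [sub_eq_zero.mp this]
  have hx0core : x₀ ∈ c.core := by
    constructor
    · rw [hx0]
    · rw [hx0]; linarith
  have hn0 : (0:ℝ) < (n:ℝ) := by exact_mod_cast Nat.lt_of_lt_of_le Nat.zero_lt_one hn
  refine ⟨key, ?_, ?_, div_pos hE hn0⟩
  · -- τ(wⁿ) ≥ E
    intro x
    refine le_stableTransLen_aux ((⇑w)^[n]) (w_dist n) x E (E + 2 * dist x x₀) ?_
    intro k
    have hmul : ((⇑w)^[n])^[k] x = (⇑w)^[n * k] x := by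
      rw [Function.iterate_mul]
    rw [hmul]
    rcases Nat.eq_zero_or_pos k with rfl | hk
    · simp only [Nat.cast_zero, mul_zero, Nat.mul_zero, Function.iterate_zero, id_eq, dist_self]
      linarith [dist_nonneg (x := x) (y := x₀)]
    · have h1 := key x₀ hx0core k hk
      have t1 := dist_triangle x₀ x ((⇑w)^[n * k] x₀)
      have t2 := dist_triangle x ((⇑w)^[n * k] x) ((⇑w)^[n * k] x₀)
      have t3 := w_dist (n * k) x x₀
      have t4 : dist x₀ x = dist x x₀ := dist_comm _ _
      linarith
  · -- τ(w) ≥ E/n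
    intro x
    set B := ∑ r ∈ Finset.range n, dist x₀ ((⇑w)^[r] x₀) with hB
    refine le_stableTransLen_aux (⇑w) (fun u v => w.dist_eq u v) x (E / n)
      (2 * E + B + 2 * dist x x₀) ?_
    intro k
    have hmod : n * (k / n) + k % n = k := Nat.div_add_mod k n
    have hr : k % n < n := Nat.mod_lt _ (by omega)
    have hBr : dist x₀ ((⇑w)^[k % n] x₀) ≤ B :=
      Finset.single_le_sum (f := fun j => dist x₀ ((⇑w)^[j] x₀))
        (fun j _ => dist_nonneg) (Finset.mem_range.mpr hr)
    have hB0 : 0 ≤ B := Finset.sum_nonneg fun j _ => dist_nonneg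
    have hshift : dist ((⇑w)^[k] x₀) ((⇑w)^[n * (k / n)] x₀) = dist x₀ ((⇑w)^[k % n] x₀) := by
      have h1 : (⇑w)^[k] x₀ = (⇑w)^[n * (k / n)] ((⇑w)^[k % n] x₀) := by
        rw [← Function.iterate_add_apply]
        congr 1
        exact hmod.symm
      rw [h1, w_dist (n * (k / n)), dist_comm]
    have hlow : dist x₀ ((⇑w)^[n * (k / n)] x₀) ≤ dist x₀ ((⇑w)^[k] x₀) + B := by
      have := dist_triangle x₀ ((⇑w)^[k] x₀) ((⇑w)^[n * (k / n)] x₀)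
      linarith [hshift ▸ hBr]
    have hxx : dist x₀ ((⇑w)^[k] x₀) ≤ dist x ((⇑w)^[k] x) + 2 * dist x x₀ := by
      have t1 := dist_triangle x₀ x ((⇑w)^[k] x₀)
      have t2 := dist_triangle x ((⇑w)^[k] x) ((⇑w)^[k] x₀)
      have t3 := w_dist k x x₀
      have t4 : dist x₀ x = dist x x₀ := dist_comm _ _
      linarith
    rcases Nat.eq_zero_or_pos (k / n) with hm0 | hm1
    · have hkn : k < n := (Nat.div_eq_zero_iff.mp hm0).resolve_left (by omega)
      have hkc : (k:ℝ) < (n:ℝ) := by exact_mod_cast hkn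
      have hfrac : E / (n:ℝ) * (k:ℝ) ≤ E := by
        rw [div_mul_eq_mul_div, div_le_iff₀ hn0]
        nlinarith
      linarith [dist_nonneg (x := x) (y := (⇑w)^[k] x), dist_nonneg (x := x) (y := x₀)]
    · have h1 := key x₀ hx0core (k / n) hm1
      have hck : (k:ℝ) < (n:ℝ) * (((k / n : ℕ):ℝ) + 1) := by
        have h2 : k < n * (k / n) + n := by
          conv_lhs => rw [← hmod]
          exact Nat.add_lt_add_left hr _
        have h3 : n * (k / n + 1) = n * (k / n) + n := Nat.mul_succ n (k / n)
        have : k < n * (k / n + 1) := h3 ▸ h2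
        exact_mod_cast this
      have hfrac : E / (n:ℝ) * (k:ℝ) ≤ E * (((k / n : ℕ):ℝ) + 1) := by
        rw [div_mul_eq_mul_div, div_le_iff₀ hn0]
        nlinarith
      linarith
end

section
/- Let X be a geodesic metric space, E > 0, and h a curtain in X dual to a geodesic α with respect to a (1,E)-coarsely Lipschitz nearest-point projection p, with half-spaces h⁺ and h⁻. Let g₁ and g₂ be isometries of X such that g₁ flips h⁺, in the strong sense that g₁(h ∪ h⁺) ⊆ h⁻, and g₂ flips h⁻, in the strong sense that g₂(h ∪ h⁻) ⊆ h⁺. Then the element g = g₂g₁ satisfies g(h ∪ h⁺) ⊆ h⁺ (so g skewers h and g(h) ∩ h = ∅), and consequently the stable translation length satisfies τ(g₂g₁) ≥ E; in particular g₂g₁ is a loxodromic isometry of X. -/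
universe u

private lemma curtain_proj_geo {X : Type u} [MetricSpace X] {E : ℝ} (c : Curtain X E)
    {t : ℝ} (ht : t ∈ Set.Icc (0 : ℝ) c.len) : c.proj (c.geo t) = t := by
  have hp := (c.isProj (c.geo t)).1
  have h1 := (c.isProj (c.geo t)).2 t ht
  rw [dist_self] at h1
  rw [c.isGeod.2 t ht _ hp] at h1
  have h2 : |t - c.proj (c.geo t)| = 0 :=
    le_antisymm h1 (abs_nonneg _)
  have h3 := abs_eq_zero.mp h2
  linarith

private lemma curtain_key_dist {X : Type u} [MetricSpace X] (hX : IsGeodesicSpace X)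
    {E : ℝ} (hE : 0 < E) (c : Curtain X E) (hlip : c.lip)
    (f fi : X → X)
    (hfiiso : ∀ u v : X, dist (fi u) (fi v) = dist u v)
    (hffi : ∀ z, f (fi z) = z) (hfif : ∀ z, fi (f z) = z)
    (hfp : ∀ z, c.proj z ≤ c.a + 6 * E → c.proj (f z) < c.a)
    (hfn : ∀ z, c.a ≤ c.proj z → c.a + 6 * E < c.proj (fi z))
    (x₀ : X) (hx₀ : c.proj x₀ = c.a)
    (n : ℕ) (hn : 2 ≤ n) :
    5 * E * ((n : ℝ) - 1) ≤ dist x₀ (f^[n] x₀) := by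
  have hfiIter : ∀ k : ℕ, ∀ u v : X, dist (fi^[k] u) (fi^[k] v) = dist u v := by
    intro k
    induction k with
    | zero => intro u v; simp
    | succ k ih =>
      intro u v
      rw [Function.iterate_succ_apply', Function.iterate_succ_apply', hfiiso, ih]
  have hfifIter : ∀ k : ℕ, ∀ z : X, fi^[k] (f^[k] z) = z :=
    fun k => Function.LeftInverse.iterate hfif k
  have hApos : ∀ m : ℕ, 1 ≤ m → c.proj (f^[m] x₀) < c.a := by
    intro m hm
    induction m with
    | zero => omega
    | succ m ih =>
      rw [Function.iterate_succ_apply']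
      rcases Nat.eq_zero_or_pos m with rfl | hm1
      · simp only [Function.iterate_zero_apply]
        exact hfp _ (by rw [hx₀]; linarith)
      · have := ih hm1
        exact hfp _ (by linarith)
  have hAneg : ∀ k : ℕ, 1 ≤ k → c.a + 6 * E < c.proj (fi^[k] x₀) := by
    intro k hk
    induction k with
    | zero => omega
    | succ k ih =>
      rw [Function.iterate_succ_apply']
      rcases Nat.eq_zero_or_pos k with rfl | hk1
      · simp only [Function.iterate_zero_apply]
        exact hfn _ (le_of_eq hx₀.symm)
      · have := ih hk1
        exact hfn _ (by linarith)
  obtain ⟨γ, hγ, hγ0, hγD⟩ := hX x₀ (f^[n] x₀)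
  set D := dist x₀ (f^[n] x₀) with hDdef
  have hD0 : 0 ≤ D := dist_nonneg
  have hq : ∀ (k : ℕ) {s t : ℝ}, s ∈ Set.Icc (0 : ℝ) D → t ∈ Set.Icc (0 : ℝ) D →
      |c.proj (fi^[k] (γ s)) - c.proj (fi^[k] (γ t))| ≤ |s - t| + E := by
    intro k s t hs ht
    have h1 := hlip (fi^[k] (γ s)) (fi^[k] (γ t))
    rwa [hfiIter, hγ.2 s hs t ht] at h1
  have hEnd : ∀ k : ℕ, k ≤ n → fi^[k] (γ D) = f^[n - k] x₀ := by
    intro k hk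
    have h1 : f^[n] x₀ = f^[k] (f^[n - k] x₀) := by
      rw [← Function.iterate_add_apply]
      congr 1
      omega
    rw [hγD, h1, hfifIter]
  set S : ℕ → Set ℝ := fun k => {t | t ∈ Set.Icc (0 : ℝ) D ∧ c.proj (fi^[k] (γ t)) < c.a}
    with hSdef
  have hDS : ∀ k : ℕ, 1 ≤ k → k ≤ n - 1 → D ∈ S k := by
    intro k hk1 hk2
    refine ⟨⟨hD0, le_refl D⟩, ?_⟩
    rw [hEnd k (by omega)]
    exact hApos (n - k) (by omega)
  have hbdd : ∀ k, BddBelow (S k) := fun k => ⟨0, fun t ht => ht.1.1⟩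
  have hSsub : ∀ (k : ℕ) (t : ℝ), t ∈ S (k + 1) → t ∈ S k := by
    intro k t ht
    refine ⟨ht.1, ?_⟩
    have h1 : fi^[k] (γ t) = f (fi^[k + 1] (γ t)) := by
      rw [Function.iterate_succ_apply', hffi]
    rw [h1]
    exact hfp _ (by linarith [ht.2])
  have main : ∀ k : ℕ, 1 ≤ k → k ≤ n - 1 → 5 * E * (k : ℝ) ≤ sInf (S k) := by
    intro k
    induction k with
    | zero => omega
    | succ k ih =>
      intro _ hk2
      apply le_csInf ⟨D, hDS (k + 1) (by omega) hk2⟩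
      intro t ht
      rcases Nat.eq_zero_or_pos k with rfl | hk1
      · have h0mem : (0 : ℝ) ∈ Set.Icc (0 : ℝ) D := ⟨le_refl 0, hD0⟩
        have habs := hq 1 h0mem ht.1
        have hne : c.a + 6 * E < c.proj (fi^[1] (γ 0)) := by
          rw [hγ0]; exact hAneg 1 le_rfl
        have ht2 := ht.2
        have h1 : c.proj (fi^[1] (γ 0)) - c.proj (fi^[1] (γ t)) ≤
            |c.proj (fi^[1] (γ 0)) - c.proj (fi^[1] (γ t))| := le_abs_self _
        have h2 : |0 - t| = t := by rw [zero_sub, abs_neg, abs_of_nonneg ht.1.1]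
        push_cast
        linarith
      · have htk := hSsub k t ht
        have hIk := ih hk1 (by omega)
        have hIle : sInf (S k) ≤ t := csInf_le (hbdd k) htk
        have hk' : (1 : ℝ) ≤ (k : ℝ) := by exact_mod_cast hk1
        have hIpos : 0 < sInf (S k) := lt_of_lt_of_le (by nlinarith) hIk
        by_contra hc
        push_neg at hc
        push_cast at hc
        set s : ℝ := max 0 (t - 5 * E) with hsdef
        have hs0 : 0 ≤ s := le_max_left _ _
        have hsD : s ≤ D := max_le hD0 (by linarith [ht.1.2])
        have hslt : s < sInf (S k) := max_lt hIpos (by linarith)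
        have hsnot : s ∉ S k := fun hs => absurd (csInf_le (hbdd k) hs) (not_le.2 hslt)
        have hsge : c.a ≤ c.proj (fi^[k] (γ s)) := by
          by_contra h
          push_neg at h
          exact hsnot ⟨⟨hs0, hsD⟩, h⟩
        have hsneg : c.a + 6 * E < c.proj (fi^[k + 1] (γ s)) := by
          rw [Function.iterate_succ_apply']
          exact hfn _ hsge
        have habs := hq (k + 1) ⟨hs0, hsD⟩ ht.1
        have h1 : c.proj (fi^[k + 1] (γ s)) - c.proj (fi^[k + 1] (γ t)) ≤
            |c.proj (fi^[k + 1] (γ s)) - c.proj (fi^[k + 1] (γ t))| := le_abs_self _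
        have hst : s ≤ t := le_trans (le_of_lt hslt) hIle
        have h2 : |s - t| = t - s := by rw [abs_sub_comm, abs_of_nonneg (by linarith)]
        have h3 : t - 5 * E ≤ s := le_max_right _ _
        have ht2 := ht.2
        linarith
  have hmain := main (n - 1) (by omega) le_rfl
  have hlast : sInf (S (n - 1)) ≤ D := csInf_le (hbdd _) (hDS (n - 1) (by omega) le_rfl)
  have hcast : ((n - 1 : ℕ) : ℝ) = (n : ℝ) - 1 := by
    rw [Nat.cast_sub (by omega : 1 ≤ n), Nat.cast_one]
  rw [hcast] at hmain
  linarith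

/-- flip then skewer. If `g₁` flips `h⁺` (i.e. `g₁(h ∪ h⁺) ⊆ h⁻`) and
`g₂` flips `h⁻` (i.e. `g₂(h ∪ h⁻) ⊆ h⁺`), then `g = g₂g₁` satisfies `g(h ∪ h⁺) ⊆ h⁺` (so `g`
skewers `h` and `g(h) ∩ h = ∅`), and `τ(g₂g₁) ≥ E`; in particular `g₂g₁` is loxodromic.
Here `g₂g₁ = g₁.trans g₂` is the isometry `x ↦ g₂(g₁ x)`. -/
theorem statement11 {X : Type u} [MetricSpace X] (hX : IsGeodesicSpace X)
    (E : ℝ) (hE : 0 < E) (c : Curtain X E) (hlip : c.lip)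
    (g₁ g₂ : X ≃ᵢ X)
    (hflip₁ : ⇑g₁ '' (c.core ∪ c.pos) ⊆ c.neg)
    (hflip₂ : ⇑g₂ '' (c.core ∪ c.neg) ⊆ c.pos) :
    ⇑(g₁.trans g₂) '' (c.core ∪ c.pos) ⊆ c.pos ∧
    (⇑(g₁.trans g₂) '' c.core) ∩ c.core = ∅ ∧
    (∀ x : X, E ≤ stableTransLen (⇑(g₁.trans g₂)) x) ∧
    (∀ x : X, 0 < stableTransLen (⇑(g₁.trans g₂)) x) := by
  
  have hproj0 : ∀ z : X, 0 ≤ c.proj z := fun z => (c.isProj z).1.1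
  have hcorepos : ∀ z : X, c.proj z ≤ c.a + 6 * E → z ∈ c.core ∪ c.pos := by
    intro z hz
    rcases le_or_gt c.a (c.proj z) with h | h
    · exact Or.inl ⟨h, hz⟩
    · exact Or.inr ⟨hproj0 z, h⟩
  have hpart1 : ⇑(g₁.trans g₂) '' (c.core ∪ c.pos) ⊆ c.pos := by
    rintro _ ⟨z, hz, rfl⟩
    have h1 : g₁ z ∈ c.neg := hflip₁ ⟨z, hz, rfl⟩
    have h2 : g₂ (g₁ z) ∈ c.pos := hflip₂ ⟨g₁ z, Or.inr h1, rfl⟩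
    simpa using h2
  have hpart2 : (⇑(g₁.trans g₂) '' c.core) ∩ c.core = ∅ := by
    rw [Set.eq_empty_iff_forall_notMem]
    rintro z ⟨hz1, hz2⟩
    have hzp : z ∈ c.pos := hpart1 (Set.image_mono Set.subset_union_left hz1)
    exact absurd hz2.1 (not_le.2 hzp.2)
  have hfp : ∀ z : X, c.proj z ≤ c.a + 6 * E → c.proj ((g₁.trans g₂) z) < c.a := by
    intro z hz
    have h2 : (g₁.trans g₂) z ∈ c.pos := hpart1 ⟨z, hcorepos z hz, rfl⟩
    exact h2.2
  have hfn : ∀ z : X, c.a ≤ c.proj z → c.a + 6 * E < c.proj ((g₁.trans g₂).symm z) := by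
    intro z hz
    by_contra h
    push_neg at h
    have h2 := hfp _ h
    rw [IsometryEquiv.apply_symm_apply] at h2
    linarith
  have hx₀ : c.proj (c.geo c.a) = c.a :=
    curtain_proj_geo c ⟨le_of_lt c.a_pos, by linarith [c.a_lt]⟩
  have hkey : ∀ n : ℕ, 2 ≤ n →
      5 * E * ((n : ℝ) - 1) ≤ dist (c.geo c.a) ((⇑(g₁.trans g₂))^[n] (c.geo c.a)) :=
    fun n hn =>
      curtain_key_dist hX hE c hlip (⇑(g₁.trans g₂)) (⇑((g₁.trans g₂).symm))
        (fun u v => (g₁.trans g₂).symm.dist_eq u v)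
        (fun z => (g₁.trans g₂).apply_symm_apply z)
        (fun z => (g₁.trans g₂).symm_apply_apply z)
        hfp hfn (c.geo c.a) hx₀ n hn
  have hfIter : ∀ (k : ℕ) (u v : X),
      dist ((⇑(g₁.trans g₂))^[k] u) ((⇑(g₁.trans g₂))^[k] v) = dist u v := by
    intro k
    induction k with
    | zero => intro u v; simp
    | succ k ih =>
      intro u v
      rw [Function.iterate_succ_apply', Function.iterate_succ_apply',
        (g₁.trans g₂).dist_eq, ih]
  have hτ : ∀ x : X, E ≤ stableTransLen (⇑(g₁.trans g₂)) x := by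
    intro x
    have hsub : Subadditive (fun k : ℕ => dist x ((⇑(g₁.trans g₂))^[k] x)) := by
      intro m k
      calc dist x ((⇑(g₁.trans g₂))^[m + k] x)
          ≤ dist x ((⇑(g₁.trans g₂))^[m] x) +
            dist ((⇑(g₁.trans g₂))^[m] x) ((⇑(g₁.trans g₂))^[m + k] x) :=
            dist_triangle _ _ _
        _ = dist x ((⇑(g₁.trans g₂))^[m] x) + dist x ((⇑(g₁.trans g₂))^[k] x) := by
            rw [Function.iterate_add_apply, hfIter m]
    have hbdd : BddBelow (Set.range fun k : ℕ => dist x ((⇑(g₁.trans g₂))^[k] x) / k) := by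
      refine ⟨0, ?_⟩
      rintro _ ⟨k, rfl⟩
      positivity
    have htend := hsub.tendsto_lim hbdd
    have hEle : E ≤ hsub.lim := by
      apply ge_of_tendsto htend
      obtain ⟨N, hN⟩ := exists_nat_ge ((5 * E + 2 * dist x (c.geo c.a)) / (4 * E))
      filter_upwards [Filter.eventually_ge_atTop (N + 2)] with n hn
      have hn2 : 2 ≤ n := by omega
      have h1 := hkey n hn2
      have h2 := dist_triangle4 (c.geo c.a) x ((⇑(g₁.trans g₂))^[n] x)
        ((⇑(g₁.trans g₂))^[n] (c.geo c.a))
      rw [hfIter n] at h2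
      have h3 : dist x (c.geo c.a) = dist (c.geo c.a) x := dist_comm _ _
      have hnN : ((N : ℕ) : ℝ) ≤ (n : ℝ) := by exact_mod_cast (by omega : N ≤ n)
      have h4 : 5 * E + 2 * dist x (c.geo c.a) ≤ 4 * E * (n : ℝ) := by
        have h5 := (div_le_iff₀ (by linarith : (0 : ℝ) < 4 * E)).1 (le_trans hN hnN)
        linarith
      have hnpos : (0 : ℝ) < (n : ℝ) := by
        have : (2 : ℝ) ≤ (n : ℝ) := by exact_mod_cast hn2
        linarith
      rw [le_div_iff₀ hnpos]
      have h6 : 5 * E * ((n : ℝ) - 1) = 5 * E * (n : ℝ) - 5 * E := by ring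
      nlinarith
    have heq : stableTransLen (⇑(g₁.trans g₂)) x = hsub.lim := htend.limUnder_eq
    rw [heq]
    exact hEle
  exact ⟨hpart1, hpart2, hτ, fun x => lt_of_lt_of_le hE (hτ x)⟩
end
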